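/- If p is a prime and p^r > w_1 + ... + w_d, then the complexes C_•(w_0 + p^r, w_1, ..., w_d) and C_•(w_0, w_1, ..., w_d) over a field of characteristic p are isomorphic as chain complexes. -/

import Mathlib

/-!
The arithmetic complex `C_•(w_0,…,w_d)`.

Edges of the path graph are labeled `1,…,d`; edge `i` joins vertices `i-1` and `i`
(vertices are `0,…,d`, with weights `w 0, …, w d`).  A subset `J ⊆ {1,…,d}` cuts the
path along the edges *not* in `J`, decomposing it into intervals.
-/

/-- The left endpoint (vertex) of the interval containing edge `j` in the decomposition
determined by `J`: the least vertex `v` such that all edges strictly between `v` and `j`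
belong to `J`. -/
noncomputable def ivLeft (J : Finset ℕ) (j : ℕ) : ℕ :=
  sInf {v : ℕ | ∀ k ∈ Finset.Ioo v j, k ∈ J}

/-- The right endpoint (vertex) of the interval containing edge `j`. -/
noncomputable def ivRight (d : ℕ) (J : Finset ℕ) (j : ℕ) : ℕ :=
  sSup {v : ℕ | v ≤ d ∧ ∀ k ∈ Finset.Ioc j v, k ∈ J}

/-- `w(J,j)`: the total weight of the interval containing edge `j`. -/
noncomputable def wtTot (w : ℕ → ℕ) (d : ℕ) (J : Finset ℕ) (j : ℕ) : ℕ :=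
  ∑ v ∈ Finset.Icc (ivLeft J j) (ivRight d J j), w v

/-- `w'(J,j)`: the weight of the left subinterval obtained by removing edge `j`. -/
noncomputable def wtL (w : ℕ → ℕ) (J : Finset ℕ) (j : ℕ) : ℕ :=
  ∑ v ∈ Finset.Icc (ivLeft J j) (j - 1), w v

/-- `s(J,j) = #{i : i < j, i ∉ J}`. -/
def sgn (J : Finset ℕ) (j : ℕ) : ℕ :=
  ((Finset.Ico 1 j).filter (fun i => i ∉ J)).card

/-- The differential of the arithmetic complex `C_•(w_0,…,w_d)`, on the free vector
space with basis `e_J` indexed by subsets `J ⊆ {1,…,d}`: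
`∂(e_J) = ∑_{j ∈ J} (-1)^{s(J,j)} C(w(J,j), w'(J,j)) e_{J∖{j}}`. -/
noncomputable def bnd (K : Type*) [Field K] (w : ℕ → ℕ) (d : ℕ) :
    ({J : Finset ℕ // J ⊆ Finset.Icc 1 d} →₀ K) →ₗ[K]
    ({J : Finset ℕ // J ⊆ Finset.Icc 1 d} →₀ K) :=
  Finsupp.lsum K fun J =>
    LinearMap.toSpanSingleton K _
      (∑ j ∈ J.1, ((-1 : K) ^ sgn J.1 j * ((wtTot w d J.1 j).choose (wtL w J.1 j) : K)) •
        Finsupp.single ⟨J.1.erase j, fun x hx => J.2 (Finset.mem_of_mem_erase hx)⟩ (1 : K))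


/-!
Write `u` for `w` with `w 0` raised by `p ^ r`. On an interval of the path avoiding vertex `0`
the weights of `u` and `w` agree. Removing an edge `j` from an interval containing vertex `0`
splits its weight as `a + b`, where `b ≤ w_1 + ⋯ + w_d < p ^ r` is the weight right of `j`; the
coefficient of `e_{J∖{j}}` in `∂ e_J` is `C(a + b, b)` for `w` and `C(a + p ^ r + b, b)` for `u`.
By Lucas' theorem these agree mod `p`: adding `p ^ r` only changes base-`p` digits of the top in
positions `≥ r`, where the digits of `b` vanish. So the two differentials are equal, and the
identity is an isomorphism of complexes.
-/

open Finset

theorem Nat.choose_add_prime_pow_modEq {p : ℕ} [Fact p.Prime] {r k : ℕ} (n : ℕ)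
    (hk : k < p ^ r) : (n + p ^ r).choose k ≡ n.choose k [MOD p] := by
  have lucas := fun m ↦
    Choose.choose_modEq_choose_mul_prod_range_choose (n := m) (k := k) (p := p) r
  have digits : ∀ i ∈ range r, (n + p ^ r) / p ^ i % p = n / p ^ i % p := by
    intro i hi
    obtain ⟨m, rfl⟩ := Nat.exists_eq_add_of_lt (mem_range.1 hi)
    have hp := (Fact.out : p.Prime).pos
    rw [show p ^ (i + m + 1) = p ^ i * (p * p ^ m) by ring,
      Nat.add_mul_div_left _ _ (by positivity), Nat.add_mul_mod_self_left]
  have h := lucas (n + p ^ r)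
  rw [Nat.div_eq_of_lt hk, Nat.choose_zero_right, prod_congr rfl fun i hi ↦ by rw [digits i hi]]
    at h
  have h' := lucas n
  rw [Nat.div_eq_of_lt hk, Nat.choose_zero_right] at h'
  exact Int.natCast_modEq_iff.1 (h.trans h'.symm)

theorem Nat.cast_choose_add_prime_pow (K : Type*) [AddMonoidWithOne K] {p : ℕ} [CharP K p]
    (hp : p.Prime) {r k : ℕ} (n : ℕ) (hk : k < p ^ r) :
    ((n + p ^ r).choose k : K) = n.choose k :=
  haveI := Fact.mk hp
  CharP.natCast_eq_natCast' K p (Nat.choose_add_prime_pow_modEq n hk)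

theorem Finset.sum_update_add {ι M : Type*} [DecidableEq ι] [AddCommMonoid M] (s : Finset ι)
    (w : ι → M) (i : ι) (c : M) :
    ∑ v ∈ s, Function.update w i (w i + c) v = ∑ v ∈ s, w v + if i ∈ s then c else 0 := by
  split_ifs with hi
  · rw [sum_update_of_mem hi, ← add_sum_erase s w hi, sdiff_singleton_eq_erase]
    abel
  · rw [sum_update_of_notMem hi, add_zero]

/-- `w(J,j) - w'(J,j)`: the weight of the right subinterval obtained by removing edge `j`. -/
noncomputable def wtR (w : ℕ → ℕ) (d : ℕ) (J : Finset ℕ) (j : ℕ) : ℕ :=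
  ∑ v ∈ Icc j (ivRight d J j), w v

theorem ivLeft_le (J : Finset ℕ) (j : ℕ) : ivLeft J j ≤ j - 1 :=
  Nat.sInf_le fun k hk ↦ by simp only [mem_Ioo] at hk; omega

theorem le_ivRight {d j : ℕ} (J : Finset ℕ) (hj : j ≤ d) : j ≤ ivRight d J j :=
  le_csSup ⟨d, fun _ hv ↦ hv.1⟩ ⟨hj, by simp⟩

theorem ivRight_le (d : ℕ) (J : Finset ℕ) (j : ℕ) : ivRight d J j ≤ d :=
  csSup_le ⟨0, by simp, by simp⟩ fun _ hv ↦ hv.1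

theorem wtTot_eq_wtL_add_wtR (w : ℕ → ℕ) {d j : ℕ} (J : Finset ℕ) (hj : j ∈ Icc 1 d) :
    wtTot w d J j = wtL w J j + wtR w d J j := by
  rw [mem_Icc] at hj
  have hL := ivLeft_le J j
  have hR := le_ivRight J hj.2
  rw [wtTot, wtL, wtR, ← sum_union]
  · congr 1; ext; simp only [mem_Icc, mem_union]; omega
  · exact disjoint_left.2 fun x hx hx' ↦ by simp only [mem_Icc] at hx hx'; omega

theorem wtR_le_sum (w : ℕ → ℕ) {d j : ℕ} (J : Finset ℕ) (hj : 1 ≤ j) :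
    wtR w d J j ≤ ∑ i ∈ Icc 1 d, w i :=
  sum_le_sum_of_subset fun v hv ↦ by
    have := ivRight_le d J j
    simp only [mem_Icc] at hv ⊢; omega

theorem cast_choose_wtTot_update_zero_add_prime_pow (K : Type*) [AddMonoidWithOne K] {p : ℕ}
    [CharP K p] (hp : p.Prime) {r d : ℕ} (w : ℕ → ℕ) (hr : ∑ i ∈ Icc 1 d, w i < p ^ r)
    (J : Finset ℕ) {j : ℕ} (hj : j ∈ Icc 1 d) :
    (((wtTot (Function.update w 0 (w 0 + p ^ r)) d J j).choose
        (wtL (Function.update w 0 (w 0 + p ^ r)) J j) : ℕ) : K) =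
      (wtTot w d J j).choose (wtL w J j) := by
  have hj1 : 1 ≤ j := (mem_Icc.1 hj).1
  have hR : wtR (Function.update w 0 (w 0 + p ^ r)) d J j = wtR w d J j := by
    rw [wtR, wtR, sum_update_add, if_neg (by simp only [mem_Icc]; omega), add_zero]
  have hL : wtL (Function.update w 0 (w 0 + p ^ r)) J j =
      wtL w J j + if 0 ∈ Icc (ivLeft J j) (j - 1) then p ^ r else 0 :=
    sum_update_add _ _ _ _
  rw [wtTot_eq_wtL_add_wtR _ _ hj, wtTot_eq_wtL_add_wtR _ _ hj, Nat.choose_symm_add,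
    Nat.choose_symm_add, hR, hL]
  split_ifs
  · rw [add_right_comm]
    exact Nat.cast_choose_add_prime_pow K hp _ ((wtR_le_sum w J hj1).trans_lt hr)
  · rw [add_zero]

theorem bnd_update_zero_add_prime_pow (K : Type*) [Field K] {p : ℕ} [CharP K p] (hp : p.Prime)
    {r d : ℕ} (w : ℕ → ℕ) (hr : ∑ i ∈ Icc 1 d, w i < p ^ r) :
    bnd K (Function.update w 0 (w 0 + p ^ r)) d = bnd K w d := by
  unfold bnd
  congr! 4 with J j hj
  rw [cast_choose_wtTot_update_zero_add_prime_pow K hp w hr J.1 (J.2 hj)]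

theorem lucas_iso_of_complexes_general (K : Type*) [Field K] (p r : ℕ) (hp : p.Prime)
    [CharP K p] (w : ℕ → ℕ) (d : ℕ)
    (hr : ∑ i ∈ Finset.Icc 1 d, w i < p ^ r) :
    ∃ e : ({J : Finset ℕ // J ⊆ Finset.Icc 1 d} →₀ K) ≃ₗ[K]
          ({J : Finset ℕ // J ⊆ Finset.Icc 1 d} →₀ K),
      (∀ x, e (bnd K (Function.update w 0 (w 0 + p ^ r)) d x) = bnd K w d (e x)) ∧
      (∀ J : {J : Finset ℕ // J ⊆ Finset.Icc 1 d},
        ∀ J' ∈ (e (Finsupp.single J (1 : K))).support, J'.1.card = J.1.card) := by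
  refine ⟨LinearEquiv.refl K _, fun x ↦ by rw [bnd_update_zero_add_prime_pow K hp w hr]; rfl,
    fun J J' hJ' ↦ ?_⟩
  rw [mem_singleton.1 (Finsupp.support_single_subset hJ')]

/-- if `p` is prime and `p^r > w_1 + ⋯ + w_d`, then over a field of
characteristic `p` the complexes `C_•(w_0 + p^r, w_1, …, w_d)` and
`C_•(w_0, w_1, …, w_d)` are isomorphic as chain complexes: there is a linear
automorphism commuting with the differentials and preserving the homological
grading (the cardinality of the indexing subsets). -/
theorem lucas_iso_of_complexes (K : Type*) [Field K] (p r : ℕ) (hp : p.Prime)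
    [CharP K p] (w : ℕ → ℕ) (d : ℕ) (hd : 1 ≤ d)
    (hr : ∑ i ∈ Finset.Icc 1 d, w i < p ^ r) :
    ∃ e : ({J : Finset ℕ // J ⊆ Finset.Icc 1 d} →₀ K) ≃ₗ[K]
          ({J : Finset ℕ // J ⊆ Finset.Icc 1 d} →₀ K),
      (∀ x, e (bnd K (Function.update w 0 (w 0 + p ^ r)) d x) = bnd K w d (e x)) ∧
      (∀ J : {J : Finset ℕ // J ⊆ Finset.Icc 1 d},
        ∀ J' ∈ (e (Finsupp.single J (1 : K))).support, J'.1.card = J.1.card) :=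
  lucas_iso_of_complexes_general K p r hp w d hr
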